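/- Let w ∈ ℝⁿ have strictly positive entries and let F₀,…,F_{J+1} be n×n real matrices forming a frame with bounds 0 < c ≤ C, i.e., c‖x‖_w² ≤ Σ_{j=0}^{J+1} ‖F_j x‖_w² ≤ C‖x‖_w² for all x ∈ ℝⁿ. Then for every m ≥ 1 and all x ∈ ℝⁿ: c^m ‖x‖_w² ≤ Σ over all tuples (j₁,k₁,…,j_m,k_m) with jᵢ ∈ {0,…,J+1}, kᵢ ∈ {1,2} of ‖B[j₁,k₁,…,j_m,k_m](x)‖_w² ≤ C^m ‖x‖_w². In particular, if c = C = 1 then this sum equals ‖x‖_w² exactly (conservation of energy in each layer). -/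

import Mathlib

open Matrix

/-- The weighted squared norm `‖x‖_w² = Σᵢ wᵢ² xᵢ²`. -/
noncomputable def wnorm2 {n : ℕ} (w x : Fin n → ℝ) : ℝ := ∑ i, (w i) ^ 2 * (x i) ^ 2

/-- The two activations: `act 0 = σ₁` is the entrywise ReLU and `act 1 = σ₂` is the
entrywise reflected ReLU. -/
def act {n : ℕ} (k : Fin 2) (x : Fin n → ℝ) : Fin n → ℝ :=
  if k = 0 then (fun i => max (x i) 0) else (fun i => max (-(x i)) 0)

/-- The BLIS coefficient `B[j₁,k₁,…,j_m,k_m](x) = σ_{k_m}(F_{j_m} ⋯ σ_{k_1}(F_{j_1} x) ⋯)`,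
where `js i = j_{i+1}` and `ks i = k_{i+1}`. -/
noncomputable def blis {n N : ℕ} (F : Fin N → Matrix (Fin n) (Fin n) ℝ) :
    (m : ℕ) → (Fin m → Fin N) → (Fin m → Fin 2) → (Fin n → ℝ) → Fin n → ℝ
  | 0, _, _, x => x
  | m + 1, js, ks, x =>
      act (ks (Fin.last m)) ((F (js (Fin.last m))) *ᵥ blis F m (Fin.init js) (Fin.init ks) x)

/-!
Since `σ₁(y)ᵢ² + σ₂(y)ᵢ² = yᵢ²`, summing over the two activations of the last layer loses no
energy, so the energy of layer `m + 1` is the frame sum `Σⱼ ‖F_j y‖_w²` summed over the outputs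
`y` of layer `m`. The frame bounds then multiply the energy by a factor between `c` and `C` at
each layer.
-/

lemma max_zero_sq_add_max_neg_zero_sq {R : Type*} [CommRing R] [LinearOrder R]
    [IsStrictOrderedRing R] (a : R) : max a 0 ^ 2 + max (-a) 0 ^ 2 = a ^ 2 := by
  rcases le_total a 0 with h | h
  · rw [max_eq_right h, max_eq_left (neg_nonneg.mpr h)]; ring
  · rw [max_eq_left h, max_eq_right (neg_nonpos.mpr h)]; ring

lemma sum_wnorm2_act {n : ℕ} (w y : Fin n → ℝ) :
    ∑ k : Fin 2, wnorm2 w (act k y) = wnorm2 w y := by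
  simp only [wnorm2, Fin.sum_univ_two, act, ← Finset.sum_add_distrib, ← mul_add]
  simp [max_zero_sq_add_max_neg_zero_sq]

lemma Fintype.sum_pi_fin_succ_eq_sum_snoc {M A : Type*} [AddCommMonoid M] [Fintype A]
    [DecidableEq A] {m : ℕ} (g : (Fin (m + 1) → A) → M) :
    ∑ f : Fin (m + 1) → A, g f = ∑ f : Fin m → A, ∑ a : A, g (Fin.snoc f a) := by
  rw [← Equiv.sum_comp (Fin.snocEquiv fun _ => A) g, Fintype.sum_prod_type, Finset.sum_comm]
  rfl

section

variable {n N : ℕ} (F : Fin N → Matrix (Fin n) (Fin n) ℝ) (w : Fin n → ℝ)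

lemma blis_snoc {m : ℕ} (js : Fin m → Fin N) (ks : Fin m → Fin 2) (j : Fin N) (k : Fin 2)
    (x : Fin n → ℝ) :
    blis F (m + 1) (Fin.snoc js j) (Fin.snoc ks k) x = act k (F j *ᵥ blis F m js ks x) := by
  simp [blis]

noncomputable def blisEnergy (m : ℕ) (x : Fin n → ℝ) : ℝ :=
  ∑ js : Fin m → Fin N, ∑ ks : Fin m → Fin 2, wnorm2 w (blis F m js ks x)

@[simp]
lemma blisEnergy_zero (x : Fin n → ℝ) : blisEnergy F w 0 x = wnorm2 w x := by
  simp [blisEnergy, blis]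

lemma blisEnergy_succ (m : ℕ) (x : Fin n → ℝ) :
    blisEnergy F w (m + 1) x =
      ∑ js : Fin m → Fin N, ∑ ks : Fin m → Fin 2, ∑ j, wnorm2 w (F j *ᵥ blis F m js ks x) := by
  rw [blisEnergy, Fintype.sum_pi_fin_succ_eq_sum_snoc]
  refine Finset.sum_congr rfl fun js _ => ?_
  simp only [Fintype.sum_pi_fin_succ_eq_sum_snoc (A := Fin 2), blis_snoc, sum_wnorm2_act]
  exact Finset.sum_comm

lemma pow_mul_wnorm2_le_blisEnergy {c : ℝ} (hc : 0 ≤ c)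
    (hlower : ∀ x, c * wnorm2 w x ≤ ∑ j, wnorm2 w (F j *ᵥ x)) (m : ℕ) (x : Fin n → ℝ) :
    c ^ m * wnorm2 w x ≤ blisEnergy F w m x := by
  induction m with
  | zero => simp
  | succ m ih =>
    calc c ^ (m + 1) * wnorm2 w x = c * (c ^ m * wnorm2 w x) := by ring
      _ ≤ c * blisEnergy F w m x := mul_le_mul_of_nonneg_left ih hc
      _ = ∑ js : Fin m → Fin N, ∑ ks : Fin m → Fin 2, c * wnorm2 w (blis F m js ks x) := by
        simp only [blisEnergy, Finset.mul_sum]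
      _ ≤ blisEnergy F w (m + 1) x := by
        rw [blisEnergy_succ]
        gcongr with js _ ks _
        exact hlower _

lemma blisEnergy_le_pow_mul_wnorm2 {C : ℝ} (hC : 0 ≤ C)
    (hupper : ∀ x, ∑ j, wnorm2 w (F j *ᵥ x) ≤ C * wnorm2 w x) (m : ℕ) (x : Fin n → ℝ) :
    blisEnergy F w m x ≤ C ^ m * wnorm2 w x := by
  induction m with
  | zero => simp
  | succ m ih =>
    calc blisEnergy F w (m + 1) x
        ≤ ∑ js : Fin m → Fin N, ∑ ks : Fin m → Fin 2, C * wnorm2 w (blis F m js ks x) := by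
          rw [blisEnergy_succ]
          gcongr with js _ ks _
          exact hupper _
      _ = C * blisEnergy F w m x := by simp only [blisEnergy, Finset.mul_sum]
      _ ≤ C * (C ^ m * wnorm2 w x) := mul_le_mul_of_nonneg_left ih hC
      _ = C ^ (m + 1) * wnorm2 w x := by ring

end

theorem blis_energy_bounds_general {n J : ℕ} (w : Fin n → ℝ)
    (F : Fin (J + 2) → Matrix (Fin n) (Fin n) ℝ) (c C : ℝ) (hc : 0 < c) (hcC : c ≤ C)
    (hframe : ∀ x : Fin n → ℝ,
      c * wnorm2 w x ≤ ∑ j, wnorm2 w ((F j) *ᵥ x) ∧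
      ∑ j, wnorm2 w ((F j) *ᵥ x) ≤ C * wnorm2 w x) :
    ∀ m : ℕ, 1 ≤ m → ∀ x : Fin n → ℝ,
      (c ^ m * wnorm2 w x ≤
        (∑ js : Fin m → Fin (J + 2), ∑ ks : Fin m → Fin 2,
          wnorm2 w (blis F m js ks x)) ∧
      (∑ js : Fin m → Fin (J + 2), ∑ ks : Fin m → Fin 2,
          wnorm2 w (blis F m js ks x)) ≤ C ^ m * wnorm2 w x) ∧
      (c = 1 ∧ C = 1 →
        (∑ js : Fin m → Fin (J + 2), ∑ ks : Fin m → Fin 2,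
          wnorm2 w (blis F m js ks x)) = wnorm2 w x) := by
  intro m _ x
  have hlower := pow_mul_wnorm2_le_blisEnergy F w hc.le (fun x => (hframe x).1) m x
  have hupper := blisEnergy_le_pow_mul_wnorm2 F w (hc.le.trans hcC) (fun x => (hframe x).2) m x
  refine ⟨⟨hlower, hupper⟩, ?_⟩
  rintro ⟨rfl, rfl⟩
  simp only [one_pow, one_mul] at hlower hupper
  exact le_antisymm hupper hlower

theorem blis_energy_bounds {n J : ℕ} (w : Fin n → ℝ) (hw : ∀ i, 0 < w i)
    (F : Fin (J + 2) → Matrix (Fin n) (Fin n) ℝ) (c C : ℝ) (hc : 0 < c) (hcC : c ≤ C)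
    (hframe : ∀ x : Fin n → ℝ,
      c * wnorm2 w x ≤ ∑ j, wnorm2 w ((F j) *ᵥ x) ∧
      ∑ j, wnorm2 w ((F j) *ᵥ x) ≤ C * wnorm2 w x) :
    ∀ m : ℕ, 1 ≤ m → ∀ x : Fin n → ℝ,
      (c ^ m * wnorm2 w x ≤
        (∑ js : Fin m → Fin (J + 2), ∑ ks : Fin m → Fin 2,
          wnorm2 w (blis F m js ks x)) ∧
      (∑ js : Fin m → Fin (J + 2), ∑ ks : Fin m → Fin 2,
          wnorm2 w (blis F m js ks x)) ≤ C ^ m * wnorm2 w x) ∧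
      (c = 1 ∧ C = 1 →
        (∑ js : Fin m → Fin (J + 2), ∑ ks : Fin m → Fin 2,
          wnorm2 w (blis F m js ks x)) = wnorm2 w x) :=
  blis_energy_bounds_general w F c C hc hcC hframe
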